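/- arXiv:2310.16638 — 2 statements merged into one kernel-verified Lean document; each statement's English description precedes it below -/
import Mathlib

section
/- Double robustness, case (ii) (correct density ratio, arbitrary regression function): for every bounded measurable f† : 𝒳 → ℝ and every bounded measurable g : 𝒳 → ℝ, the population DR risk with r† = r₀ equals the test-data population risk: R̈(g; f†, r₀) = ∫_{𝒳×ℝ} (y − g(x))² dQ(x,y). -/
/-!
With `r₀ = dq/dp`, reweighting by `r₀` turns `P`-integrals into `Q`-integrals, since
`q ⊗ₘ κ = (p ⊗ₘ κ).withDensity (r₀ ∘ Prod.fst)`. The first term of the DR risk is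
therefore `∫ ((y - g x)² - (f† x - g x)²) dQ`, and the second is `∫ (f† x - g x)² dQ`
because the first marginal of `Q` is `q`. The correction terms cancel.
-/

open MeasureTheory ProbabilityTheory
open scoped ENNReal

lemma sq_sub_le_of_abs_le {a b A B : ℝ} (ha : |a| ≤ A) (hb : |b| ≤ B) :
    (a - b) ^ 2 ≤ (A + B) ^ 2 := by
  rw [← sq_abs]
  exact pow_le_pow_left₀ (abs_nonneg _) ((abs_sub a b).trans (add_le_add ha hb)) 2

namespace MeasureTheory

variable {α β : Type*} {mα : MeasurableSpace α} {mβ : MeasurableSpace β} {μ : Measure α}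

lemma integral_withDensity_ofReal {w : α → ℝ} (hw : AEMeasurable w μ)
    (hw_nonneg : 0 ≤ᵐ[μ] w) (F : α → ℝ) :
    ∫ x, F x ∂μ.withDensity (fun x => ENNReal.ofReal (w x)) = ∫ x, F x * w x ∂μ := by
  rw [integral_withDensity_eq_integral_toReal_smul₀ hw.ennreal_ofReal
    (ae_of_all _ fun _ => ENNReal.ofReal_lt_top)]
  refine integral_congr_ae ?_
  filter_upwards [hw_nonneg] with x hx
  rw [ENNReal.toReal_ofReal hx, smul_eq_mul, mul_comm]

lemma isProbabilityMeasure_withDensity_ofReal {w : α → ℝ} (hw_nonneg : 0 ≤ᵐ[μ] w)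
    (hw_int : ∫ x, w x ∂μ = 1) :
    IsProbabilityMeasure (μ.withDensity fun x => ENNReal.ofReal (w x)) := by
  have hw : Integrable w μ := .of_integral_ne_zero (by simp [hw_int])
  constructor
  rw [withDensity_apply _ MeasurableSet.univ, Measure.restrict_univ,
    ← ofReal_integral_eq_lintegral_ofReal hw hw_nonneg, hw_int, ENNReal.ofReal_one]

namespace Measure

variable {κ : Kernel α β}

lemma withDensity_compProd_left [SFinite μ] [IsSFiniteKernel κ] {f : α → ℝ≥0∞}
    (hf : Measurable f) :
    μ.withDensity f ⊗ₘ κ = (μ ⊗ₘ κ).withDensity fun z => f z.1 := by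
  ext s hs
  rw [compProd_apply hs, lintegral_withDensity_eq_lintegral_mul _ hf
      (Kernel.measurable_kernel_prodMk_left hs),
    withDensity_apply _ hs, ← lintegral_indicator hs,
    lintegral_compProd (f := s.indicator fun z => f z.1)
      ((hf.comp measurable_fst).indicator hs)]
  congr with a
  have hslice :
      ∀ b, s.indicator (fun z => f z.1) (a, b) = f a * (Prod.mk a ⁻¹' s).indicator 1 b :=
    fun b => by by_cases hb : (a, b) ∈ s <;> simp [hb]
  simp only [hslice, Pi.mul_apply]
  rw [lintegral_const_mul _ (measurable_one.indicator (measurable_prodMk_left hs)),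
    lintegral_indicator_one (measurable_prodMk_left hs)]

lemma integral_comp_fst_compProd [SFinite μ] [IsMarkovKernel κ] {f : α → ℝ}
    (hf : AEStronglyMeasurable f μ) :
    ∫ z, f z.1 ∂(μ ⊗ₘ κ) = ∫ x, f x ∂μ := by
  conv_rhs => rw [← fst_compProd μ κ, Measure.fst]
  rw [integral_map measurable_fst.aemeasurable (by rwa [← Measure.fst, fst_compProd])]

end Measure

lemma integrable_sq_sub_compProd [IsFiniteMeasure μ] {κ : Kernel α ℝ} [IsFiniteKernel κ] {C : ℝ}
    (hκ : ∀ x, ∀ᵐ y ∂(κ x), y ∈ Set.Icc (-C) C)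
    {g : α → ℝ} (hg : Measurable g) {Cg : ℝ} (hg_bdd : ∀ x, |g x| ≤ Cg) :
    Integrable (fun z : α × ℝ => (z.2 - g z.1) ^ 2) (μ ⊗ₘ κ) := by
  have hy : ∀ᵐ z ∂(μ ⊗ₘ κ), z.2 ∈ Set.Icc (-C) C :=
    (Measure.ae_compProd_iff (measurable_snd measurableSet_Icc)).2 (ae_of_all _ hκ)
  refine .of_bound (by fun_prop) ((C + Cg) ^ 2) ?_
  filter_upwards [hy] with z hz
  rw [Real.norm_of_nonneg (sq_nonneg _)]
  exact sq_sub_le_of_abs_le (abs_le.2 hz) (hg_bdd _)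

end MeasureTheory

theorem dr_risk_correct_density_ratio_general
    {𝒳 : Type*} [MeasurableSpace 𝒳]
    (p : Measure 𝒳) [IsProbabilityMeasure p]
    (r₀ : 𝒳 → ℝ) (hr₀_meas : Measurable r₀) (hr₀_nonneg : ∀ x, 0 ≤ r₀ x)
    (hr₀_int : ∫ x, r₀ x ∂p = 1)
    (κ : Kernel 𝒳 ℝ) [IsMarkovKernel κ]
    (C : ℝ) (hκ_supp : ∀ x, ∀ᵐ y ∂(κ x), y ∈ Set.Icc (-C) C)
    (fdag : 𝒳 → ℝ) (hfdag_meas : Measurable fdag)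
    (Cfdag : ℝ) (hfdag_bdd : ∀ x, |fdag x| ≤ Cfdag)
    (g : 𝒳 → ℝ) (hg_meas : Measurable g)
    (Cg : ℝ) (hg_bdd : ∀ x, |g x| ≤ Cg) :
    (∫ z : 𝒳 × ℝ, ((z.2 - g z.1) ^ 2 - (fdag z.1 - g z.1) ^ 2) * r₀ z.1
          ∂(p.compProd κ)
        + ∫ x, (fdag x - g x) ^ 2 ∂(p.withDensity (fun x => ENNReal.ofReal (r₀ x))))
      = ∫ z : 𝒳 × ℝ, (z.2 - g z.1) ^ 2
          ∂((p.withDensity (fun x => ENNReal.ofReal (r₀ x))).compProd κ) := by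
  set q := p.withDensity fun x => ENNReal.ofReal (r₀ x)
  have : IsProbabilityMeasure q :=
    isProbabilityMeasure_withDensity_ofReal (ae_of_all _ hr₀_nonneg) hr₀_int
  have hQ : q ⊗ₘ κ = (p ⊗ₘ κ).withDensity fun z => ENNReal.ofReal (r₀ z.1) :=
    Measure.withDensity_compProd_left hr₀_meas.ennreal_ofReal
  have hA : Integrable (fun z : 𝒳 × ℝ => (z.2 - g z.1) ^ 2) (q ⊗ₘ κ) :=
    integrable_sq_sub_compProd hκ_supp hg_meas hg_bdd
  have hB : Integrable (fun z : 𝒳 × ℝ => (fdag z.1 - g z.1) ^ 2) (q ⊗ₘ κ) :=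
    .of_bound (by fun_prop) ((Cfdag + Cg) ^ 2) (ae_of_all _ fun z => by
      rw [Real.norm_of_nonneg (sq_nonneg _)]
      exact sq_sub_le_of_abs_le (hfdag_bdd _) (hg_bdd _))
  rw [← integral_withDensity_ofReal (w := fun z : 𝒳 × ℝ => r₀ z.1) (by fun_prop)
      (ae_of_all _ fun z => hr₀_nonneg z.1), ← hQ,
    ← Measure.integral_comp_fst_compProd (κ := κ) (by fun_prop), integral_sub hA hB,
    sub_add_cancel]

/-- Double robustness, case (ii) (correct density ratio, arbitrary regression
function): for every bounded measurable `f†` and bounded measurable `g`, the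
population DR risk with `r† = r₀` equals the test-data population risk:
`R̈(g; f†, r₀) = ∫ (y − g x)² dQ`. -/
theorem dr_risk_correct_density_ratio
    {𝒳 : Type*} [MeasurableSpace 𝒳]
    (p : Measure 𝒳) [IsProbabilityMeasure p]
    (r₀ : 𝒳 → ℝ) (hr₀_meas : Measurable r₀) (hr₀_nonneg : ∀ x, 0 ≤ r₀ x)
    (Cr : ℝ) (hr₀_bdd : ∀ x, r₀ x ≤ Cr)
    (hr₀_int : ∫ x, r₀ x ∂p = 1)
    (κ : Kernel 𝒳 ℝ) [IsMarkovKernel κ]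
    (C : ℝ) (hC : 0 < C) (hκ_supp : ∀ x, ∀ᵐ y ∂(κ x), y ∈ Set.Icc (-C) C)
    (f₀ : 𝒳 → ℝ) (hf₀ : ∀ x, f₀ x = ∫ y, y ∂(κ x))
    (fdag : 𝒳 → ℝ) (hfdag_meas : Measurable fdag)
    (Cfdag : ℝ) (hfdag_bdd : ∀ x, |fdag x| ≤ Cfdag)
    (g : 𝒳 → ℝ) (hg_meas : Measurable g)
    (Cg : ℝ) (hg_bdd : ∀ x, |g x| ≤ Cg) :
    (∫ z : 𝒳 × ℝ, ((z.2 - g z.1) ^ 2 - (fdag z.1 - g z.1) ^ 2) * r₀ z.1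
          ∂(p.compProd κ)
        + ∫ x, (fdag x - g x) ^ 2 ∂(p.withDensity (fun x => ENNReal.ofReal (r₀ x))))
      = ∫ z : 𝒳 × ℝ, (z.2 - g z.1) ^ 2
          ∂((p.withDensity (fun x => ENNReal.ofReal (r₀ x))).compProd κ) :=
  dr_risk_correct_density_ratio_general p r₀ hr₀_meas hr₀_nonneg hr₀_int κ C hκ_supp fdag hfdag_meas
    Cfdag hfdag_bdd g hg_meas Cg hg_bdd
end

section
/- Product bound on the DR score bias: for all bounded measurable h, f̂ : 𝒳 → ℝ and every nonnegative bounded measurable r̂ : 𝒳 → ℝ, | ∫_{𝒳×ℝ} h(x)(y − f̂(x)) r̂(x) dP(x,y) + ∫_𝒳 h(x)(f̂(x) − f₀(x)) dq(x) − ∫_{𝒳×ℝ} h(x)(y − f₀(x)) r₀(x) dP(x,y) | ≤ (sup_{x∈𝒳} |h(x)|) · ‖f₀ − f̂‖_{L²(p)} · ‖r̂ − r₀‖_{L²(p)}, where ‖u‖_{L²(p)} := (∫_𝒳 u(x)² dp(x))^{1/2}. -/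
/-!
Integrating out the outcome, each residual term `∫ h(x)(y - g(x)) r(x) dP` becomes
`∫ h (f₀ - g) r dp`, so the term at `(f₀, r₀)` vanishes, while the `q`-integral is
`∫ h (f̂ - f₀) r₀ dp`. The bias is therefore `∫ h (f₀ - f̂)(r̂ - r₀) dp`, which Cauchy–Schwarz in
`L²(p)` bounds by `sup |h| ⬝ ‖f₀ - f̂‖₂ ⬝ ‖r̂ - r₀‖₂`.
-/

open MeasureTheory ProbabilityTheory

section CauchySchwarz

variable {α : Type*} [MeasurableSpace α] {μ : Measure α}

lemma integral_abs_mul_abs_le_sqrt_mul_sqrt {a b : α → ℝ} (ha : MemLp a 2 μ)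
    (hb : MemLp b 2 μ) :
    ∫ x, |a x| * |b x| ∂μ ≤ √(∫ x, a x ^ 2 ∂μ) * √(∫ x, b x ^ 2 ∂μ) := by
  have h := integral_mul_norm_le_Lp_mul_Lq (μ := μ) Real.HolderConjugate.two_two
    (by simpa using ha) (by simpa using hb)
  simpa only [Real.norm_eq_abs, Real.rpow_two, sq_abs, Real.sqrt_eq_rpow] using h

lemma abs_integral_mul_mul_le_iSup_mul_sqrt_mul_sqrt {w a b : α → ℝ}
    (hw : BddAbove (Set.range fun x ↦ |w x|)) (ha : MemLp a 2 μ) (hb : MemLp b 2 μ) :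
    |∫ x, w x * a x * b x ∂μ|
      ≤ (⨆ x, |w x|) * √(∫ x, a x ^ 2 ∂μ) * √(∫ x, b x ^ 2 ∂μ) := by
  have hab : Integrable (fun x ↦ |a x| * |b x|) μ := ha.abs.integrable_mul hb.abs
  calc |∫ x, w x * a x * b x ∂μ| ≤ ∫ x, |w x * a x * b x| ∂μ := abs_integral_le_integral_abs
    _ ≤ ∫ x, (⨆ x, |w x|) * (|a x| * |b x|) ∂μ := by
      refine integral_mono_of_nonneg (.of_forall fun x ↦ abs_nonneg _) (hab.const_mul _)
        (.of_forall fun x ↦ ?_)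
      dsimp only
      rw [abs_mul, abs_mul, mul_assoc]
      exact mul_le_mul_of_nonneg_right (le_ciSup hw x) (by positivity)
    _ ≤ (⨆ x, |w x|) * (√(∫ x, a x ^ 2 ∂μ) * √(∫ x, b x ^ 2 ∂μ)) := by
      rw [integral_const_mul]
      exact mul_le_mul_of_nonneg_left (integral_abs_mul_abs_le_sqrt_mul_sqrt ha hb)
        (Real.iSup_nonneg fun x ↦ abs_nonneg _)
    _ = _ := (mul_assoc ..).symm

end CauchySchwarz

lemma integral_withDensity_ofReal_eq_integral_mul {α : Type*} [MeasurableSpace α]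
    {μ : Measure α} {r : α → ℝ} (hr : Measurable r) (hr_nonneg : ∀ x, 0 ≤ r x) (u : α → ℝ) :
    ∫ x, u x ∂(μ.withDensity fun x ↦ ENNReal.ofReal (r x)) = ∫ x, r x * u x ∂μ := by
  rw [integral_withDensity_eq_integral_toReal_smul hr.ennreal_ofReal
    (.of_forall fun _ ↦ ENNReal.ofReal_lt_top)]
  simp only [ENNReal.toReal_ofReal (hr_nonneg _), smul_eq_mul]

section BoundedOutcome

variable {C : ℝ}

lemma integrable_id_of_ae_mem_Icc {ν : Measure ℝ} [IsFiniteMeasure ν]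
    (hν : ∀ᵐ y ∂ν, y ∈ Set.Icc (-C) C) : Integrable (fun y ↦ y) ν :=
  .of_bound aestronglyMeasurable_id C
    (hν.mono fun y hy ↦ (Real.norm_eq_abs y).trans_le (abs_le.mpr hy))

lemma abs_integral_id_le_of_ae_mem_Icc {ν : Measure ℝ} [IsProbabilityMeasure ν]
    (hν : ∀ᵐ y ∂ν, y ∈ Set.Icc (-C) C) : |∫ y, y ∂ν| ≤ C := by
  simpa using norm_integral_le_of_norm_le_const
    (hν.mono fun y hy ↦ (Real.norm_eq_abs y).trans_le (abs_le.mpr hy))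

variable {𝒳 : Type*} [MeasurableSpace 𝒳] {μ : Measure 𝒳} {κ : Kernel 𝒳 ℝ}

lemma measurable_integral_id_kernel : Measurable fun x ↦ ∫ y, y ∂κ x :=
  (stronglyMeasurable_id.integral_kernel (f := fun y : ℝ ↦ y)).measurable

lemma integrable_compProd_mul_sub [IsFiniteMeasure μ] [IsFiniteKernel κ]
    (hκ : ∀ x, ∀ᵐ y ∂(κ x), y ∈ Set.Icc (-C) C)
    {φ g : 𝒳 → ℝ} (hφ : Measurable φ) (hg : Measurable g) {Cφ Cg : ℝ}
    (hφC : ∀ x, |φ x| ≤ Cφ) (hgC : ∀ x, |g x| ≤ Cg) :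
    Integrable (fun z : 𝒳 × ℝ ↦ φ z.1 * (z.2 - g z.1)) (μ.compProd κ) := by
  have hsnd : ∀ᵐ z ∂(μ.compProd κ), z.2 ∈ Set.Icc (-C) C :=
    Measure.ae_compProd_of_ae_ae (measurable_snd measurableSet_Icc) (.of_forall hκ)
  refine .of_bound (by fun_prop) (Cφ * (C + Cg)) (hsnd.mono fun z hz ↦ ?_)
  rw [Real.norm_eq_abs, abs_mul]
  exact mul_le_mul (hφC z.1) ((abs_sub _ _).trans (add_le_add (abs_le.mpr hz) (hgC z.1)))
    (abs_nonneg _) ((abs_nonneg _).trans (hφC z.1))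

lemma integral_compProd_mul_sub [SFinite μ] [IsMarkovKernel κ]
    (hκ : ∀ x, Integrable (fun y ↦ y) (κ x)) {φ g : 𝒳 → ℝ}
    (hint : Integrable (fun z : 𝒳 × ℝ ↦ φ z.1 * (z.2 - g z.1)) (μ.compProd κ)) :
    ∫ z, φ z.1 * (z.2 - g z.1) ∂(μ.compProd κ) = ∫ x, φ x * ((∫ y, y ∂κ x) - g x) ∂μ := by
  rw [Measure.integral_compProd hint]
  refine integral_congr_ae (.of_forall fun x ↦ ?_)
  simp only [integral_const_mul, integral_sub (hκ x) (integrable_const _), integral_const,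
    probReal_univ, one_smul]

lemma integral_compProd_mul_sub_mul [IsFiniteMeasure μ] [IsMarkovKernel κ]
    (hκ : ∀ x, ∀ᵐ y ∂(κ x), y ∈ Set.Icc (-C) C) {φ g ψ : 𝒳 → ℝ} (hφ : Measurable φ)
    (hg : Measurable g) (hψ : Measurable ψ) {Cφ Cg Cψ : ℝ} (hφC : ∀ x, |φ x| ≤ Cφ)
    (hgC : ∀ x, |g x| ≤ Cg) (hψC : ∀ x, |ψ x| ≤ Cψ) :
    ∫ z, φ z.1 * (z.2 - g z.1) * ψ z.1 ∂(μ.compProd κ)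
      = ∫ x, φ x * ((∫ y, y ∂κ x) - g x) * ψ x ∂μ := by
  have hφψC : ∀ x, |φ x * ψ x| ≤ Cφ * Cψ := fun x ↦ (abs_mul _ _).trans_le
    (mul_le_mul (hφC x) (hψC x) (abs_nonneg _) ((abs_nonneg _).trans (hφC x)))
  calc ∫ z, φ z.1 * (z.2 - g z.1) * ψ z.1 ∂(μ.compProd κ)
      = ∫ z, φ z.1 * ψ z.1 * (z.2 - g z.1) ∂(μ.compProd κ) := by simp only [mul_right_comm]
    _ = ∫ x, φ x * ψ x * ((∫ y, y ∂κ x) - g x) ∂μ :=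
      integral_compProd_mul_sub (fun x ↦ integrable_id_of_ae_mem_Icc (hκ x))
        (integrable_compProd_mul_sub hκ (hφ.mul hψ) hg hφψC hgC)
    _ = ∫ x, φ x * ((∫ y, y ∂κ x) - g x) * ψ x ∂μ := by simp only [mul_right_comm]

end BoundedOutcome

lemma dr_score_bias_eq_integral {𝒳 : Type*} [MeasurableSpace 𝒳] {p : Measure 𝒳}
    [IsFiniteMeasure p] {κ : Kernel 𝒳 ℝ} [IsMarkovKernel κ] {C : ℝ}
    (hκ : ∀ x, ∀ᵐ y ∂(κ x), y ∈ Set.Icc (-C) C) {f₀ h fhat rhat r₀ : 𝒳 → ℝ}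
    (hf₀ : ∀ x, f₀ x = ∫ y, y ∂κ x) (hf₀_meas : Measurable f₀) (hf₀_bdd : ∀ x, |f₀ x| ≤ C)
    (hh : Measurable h) {Ch : ℝ} (hh_bdd : ∀ x, |h x| ≤ Ch)
    (hfhat : Measurable fhat) {Cf : ℝ} (hfhat_bdd : ∀ x, |fhat x| ≤ Cf)
    (hrhat : Measurable rhat) {Crhat : ℝ} (hrhat_bdd : ∀ x, |rhat x| ≤ Crhat)
    (hr₀ : Measurable r₀) (hr₀_nonneg : ∀ x, 0 ≤ r₀ x) {Cr : ℝ} (hr₀_bdd : ∀ x, |r₀ x| ≤ Cr) :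
    (∫ z, h z.1 * (z.2 - fhat z.1) * rhat z.1 ∂(p.compProd κ))
        + (∫ x, h x * (fhat x - f₀ x) ∂(p.withDensity fun x ↦ ENNReal.ofReal (r₀ x)))
        - (∫ z, h z.1 * (z.2 - f₀ z.1) * r₀ z.1 ∂(p.compProd κ))
      = ∫ x, h x * (f₀ x - fhat x) * (rhat x - r₀ x) ∂p := by
  have memLp_top {u : 𝒳 → ℝ} {B : ℝ} (hu : Measurable u) (hB : ∀ x, |u x| ≤ B) :
      MemLp u ⊤ p :=
    memLp_top_of_bound hu.aestronglyMeasurable B (.of_forall hB)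
  have hA : MemLp (fun x ↦ h x * (f₀ x - fhat x)) ⊤ p :=
    ((memLp_top hf₀_meas hf₀_bdd).sub (memLp_top hfhat hfhat_bdd)).mul' (memLp_top hh hh_bdd)
  have hA_mul {r : 𝒳 → ℝ} (hr : MemLp r ⊤ p) :
      Integrable (fun x ↦ h x * (f₀ x - fhat x) * r x) p := (hr.mul' hA).integrable le_top
  have hq_term : ∫ x, h x * (fhat x - f₀ x) ∂(p.withDensity fun x ↦ ENNReal.ofReal (r₀ x))
      = -∫ x, h x * (f₀ x - fhat x) * r₀ x ∂p := by
    rw [integral_withDensity_ofReal_eq_integral_mul hr₀ hr₀_nonneg, ← integral_neg]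
    congr 1 with x
    ring
  rw [integral_compProd_mul_sub_mul hκ hh hfhat hrhat hh_bdd hfhat_bdd hrhat_bdd,
    integral_compProd_mul_sub_mul hκ hh hf₀_meas hr₀ hh_bdd hf₀_bdd hr₀_bdd, hq_term]
  simp only [← hf₀, sub_self, mul_zero, zero_mul, integral_zero, sub_zero, ← sub_eq_add_neg]
  rw [← integral_sub (hA_mul (memLp_top hrhat hrhat_bdd)) (hA_mul (memLp_top hr₀ hr₀_bdd))]
  congr 1 with x
  ring

theorem dr_score_product_bias_bound_general
    {𝒳 : Type*} [MeasurableSpace 𝒳]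
    (p : Measure 𝒳) [IsProbabilityMeasure p]
    (r₀ : 𝒳 → ℝ) (hr₀_meas : Measurable r₀) (hr₀_nonneg : ∀ x, 0 ≤ r₀ x)
    (Cr : ℝ) (hr₀_bdd : ∀ x, r₀ x ≤ Cr)
    (κ : Kernel 𝒳 ℝ) [IsMarkovKernel κ]
    (C : ℝ) (hκ_supp : ∀ x, ∀ᵐ y ∂(κ x), y ∈ Set.Icc (-C) C)
    (f₀ : 𝒳 → ℝ) (hf₀ : ∀ x, f₀ x = ∫ y, y ∂(κ x))
    (h : 𝒳 → ℝ) (hh_meas : Measurable h)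
    (Ch : ℝ) (hh_bdd : ∀ x, |h x| ≤ Ch)
    (fhat : 𝒳 → ℝ) (hfhat_meas : Measurable fhat)
    (Cf : ℝ) (hfhat_bdd : ∀ x, |fhat x| ≤ Cf)
    (rhat : 𝒳 → ℝ) (hrhat_meas : Measurable rhat) (hrhat_nonneg : ∀ x, 0 ≤ rhat x)
    (Crhat : ℝ) (hrhat_bdd : ∀ x, rhat x ≤ Crhat) :
    |(∫ z : 𝒳 × ℝ, h z.1 * (z.2 - fhat z.1) * rhat z.1 ∂(p.compProd κ))
        + (∫ x, h x * (fhat x - f₀ x) ∂(p.withDensity (fun x => ENNReal.ofReal (r₀ x))))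
        - (∫ z : 𝒳 × ℝ, h z.1 * (z.2 - f₀ z.1) * r₀ z.1 ∂(p.compProd κ))|
      ≤ (⨆ x, |h x|) * Real.sqrt (∫ x, (f₀ x - fhat x) ^ 2 ∂p)
          * Real.sqrt (∫ x, (rhat x - r₀ x) ^ 2 ∂p) := by
  have hf₀_meas : Measurable f₀ := funext hf₀ ▸ measurable_integral_id_kernel
  have hf₀_bdd (x : 𝒳) : |f₀ x| ≤ C := hf₀ x ▸ abs_integral_id_le_of_ae_mem_Icc (hκ_supp x)
  have hr₀_abs (x : 𝒳) : |r₀ x| ≤ Cr := (abs_of_nonneg (hr₀_nonneg x)).trans_le (hr₀_bdd x)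
  have hrhat_abs (x : 𝒳) : |rhat x| ≤ Crhat :=
    (abs_of_nonneg (hrhat_nonneg x)).trans_le (hrhat_bdd x)
  have memLp_two {u : 𝒳 → ℝ} {B : ℝ} (hu : Measurable u) (hB : ∀ x, |u x| ≤ B) : MemLp u 2 p :=
    .of_bound hu.aestronglyMeasurable B (.of_forall hB)
  rw [dr_score_bias_eq_integral hκ_supp hf₀ hf₀_meas hf₀_bdd hh_meas hh_bdd hfhat_meas hfhat_bdd
    hrhat_meas hrhat_abs hr₀_meas hr₀_nonneg hr₀_abs]
  exact abs_integral_mul_mul_le_iSup_mul_sqrt_mul_sqrt ⟨Ch, Set.forall_mem_range.2 hh_bdd⟩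
    ((memLp_two hf₀_meas hf₀_bdd).sub (memLp_two hfhat_meas hfhat_bdd))
    ((memLp_two hrhat_meas hrhat_abs).sub (memLp_two hr₀_meas hr₀_abs))

/-- Product bound on the DR score bias: the bias of the DR score at nuisance
estimates `(f̂, r̂)` is bounded by `(sup |h|) ⬝ ‖f₀ − f̂‖_{L²(p)} ⬝ ‖r̂ − r₀‖_{L²(p)}`. -/
theorem dr_score_product_bias_bound
    {𝒳 : Type*} [MeasurableSpace 𝒳]
    (p : Measure 𝒳) [IsProbabilityMeasure p]
    (r₀ : 𝒳 → ℝ) (hr₀_meas : Measurable r₀) (hr₀_nonneg : ∀ x, 0 ≤ r₀ x)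
    (Cr : ℝ) (hr₀_bdd : ∀ x, r₀ x ≤ Cr)
    (hr₀_int : ∫ x, r₀ x ∂p = 1)
    (κ : Kernel 𝒳 ℝ) [IsMarkovKernel κ]
    (C : ℝ) (hC : 0 < C) (hκ_supp : ∀ x, ∀ᵐ y ∂(κ x), y ∈ Set.Icc (-C) C)
    (f₀ : 𝒳 → ℝ) (hf₀ : ∀ x, f₀ x = ∫ y, y ∂(κ x))
    (h : 𝒳 → ℝ) (hh_meas : Measurable h)
    (Ch : ℝ) (hh_bdd : ∀ x, |h x| ≤ Ch)
    (fhat : 𝒳 → ℝ) (hfhat_meas : Measurable fhat)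
    (Cf : ℝ) (hfhat_bdd : ∀ x, |fhat x| ≤ Cf)
    (rhat : 𝒳 → ℝ) (hrhat_meas : Measurable rhat) (hrhat_nonneg : ∀ x, 0 ≤ rhat x)
    (Crhat : ℝ) (hrhat_bdd : ∀ x, rhat x ≤ Crhat) :
    |(∫ z : 𝒳 × ℝ, h z.1 * (z.2 - fhat z.1) * rhat z.1 ∂(p.compProd κ))
        + (∫ x, h x * (fhat x - f₀ x) ∂(p.withDensity (fun x => ENNReal.ofReal (r₀ x))))
        - (∫ z : 𝒳 × ℝ, h z.1 * (z.2 - f₀ z.1) * r₀ z.1 ∂(p.compProd κ))|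
      ≤ (⨆ x, |h x|) * Real.sqrt (∫ x, (f₀ x - fhat x) ^ 2 ∂p)
          * Real.sqrt (∫ x, (rhat x - r₀ x) ^ 2 ∂p) :=
  dr_score_product_bias_bound_general p r₀ hr₀_meas hr₀_nonneg Cr hr₀_bdd κ C hκ_supp f₀ hf₀ h
    hh_meas Ch hh_bdd fhat hfhat_meas Cf hfhat_bdd rhat hrhat_meas hrhat_nonneg Crhat hrhat_bdd
end
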